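/- Under assumptions (A1), (A2), (A4), if λ_k ↓ 0 and p_k is a global minimizer of f_{λ_k} over 𝒫 for each k, then every accumulation point of the sequence (p_k) is a global minimizer of the unregularized reduced objective f_u over 𝒫. -/

import Mathlib

/-!
Under full column rank, `f_u(p)` is attained at the normal-equation solution
`w(p) = (MᵀM)⁻¹Mᵀy`, which depends continuously on `p`, so `f_u` is continuous on `𝒫`.
For any competitor `q'`, minimality of `p_k` gives
`f_u(p_k) ≤ f_{λ_k}(p_k) ≤ f_{λ_k}(q') ≤ f_u(q') + (λ_k/2)‖w(q')‖²`.
Hence, for every `ε > 0`, the sequence eventually lies in the closed set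
`{p ∈ 𝒫 | f_u(p) ≤ f_u(q') + ε}`, and so does each of its cluster points.
-/

open Matrix Filter Topology

noncomputable def sqnorm {k : ℕ} (v : Fin k → ℝ) : ℝ := ∑ i, v i ^ 2

noncomputable def ridgeMin {n m : ℕ} (A : Matrix (Fin n) (Fin m) ℝ)
    (y : Fin n → ℝ) (lam : ℝ) : ℝ :=
  ⨅ w : Fin m → ℝ, ((1 / 2) * sqnorm (A *ᵥ w - y) + (lam / 2) * sqnorm w)

noncomputable def lsqMin {n m : ℕ} (A : Matrix (Fin n) (Fin m) ℝ)
    (y : Fin n → ℝ) : ℝ :=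
  ⨅ w : Fin m → ℝ, (1 / 2) * sqnorm (A *ᵥ w - y)

section sqnorm

variable {k : ℕ}

lemma sqnorm_nonneg (v : Fin k → ℝ) : 0 ≤ sqnorm v :=
  Finset.sum_nonneg fun _ _ => sq_nonneg _

lemma sqnorm_eq_dotProduct (v : Fin k → ℝ) : sqnorm v = v ⬝ᵥ v := by
  simp [sqnorm, dotProduct, sq]

lemma sqnorm_add_of_dotProduct_eq_zero {u v : Fin k → ℝ} (h : u ⬝ᵥ v = 0) :
    sqnorm (u + v) = sqnorm u + sqnorm v := by
  simp only [sqnorm_eq_dotProduct, add_dotProduct, dotProduct_add, h, dotProduct_comm v u]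
  ring

lemma continuous_sqnorm : Continuous (sqnorm (k := k)) := by
  unfold sqnorm
  fun_prop

end sqnorm

section Objectives

variable {n m : ℕ} (A : Matrix (Fin n) (Fin m) ℝ) (y : Fin n → ℝ)

lemma bddBelow_range_lsqObjective :
    BddBelow (Set.range fun w : Fin m → ℝ => 1 / 2 * sqnorm (A *ᵥ w - y)) := by
  refine ⟨0, ?_⟩
  rintro _ ⟨w, rfl⟩
  exact mul_nonneg (by norm_num) (sqnorm_nonneg _)

lemma bddBelow_range_ridgeObjective {lam : ℝ} (hlam : 0 ≤ lam) :
    BddBelow (Set.range fun w : Fin m → ℝ =>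
      1 / 2 * sqnorm (A *ᵥ w - y) + lam / 2 * sqnorm w) := by
  refine ⟨0, ?_⟩
  rintro _ ⟨w, rfl⟩
  exact add_nonneg (mul_nonneg (by norm_num) (sqnorm_nonneg _))
    (mul_nonneg (by linarith) (sqnorm_nonneg w))

end Objectives

section LeastSquares

variable {n m : ℕ}

noncomputable def lsqSolution (A : Matrix (Fin n) (Fin m) ℝ) (y : Fin n → ℝ) : Fin m → ℝ :=
  (Aᵀ * A)⁻¹ *ᵥ (Aᵀ *ᵥ y)

lemma isUnit_det_transpose_mul_self_of_rank_eq {A : Matrix (Fin n) (Fin m) ℝ}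
    (h : A.rank = m) : IsUnit (Aᵀ * A).det := by
  rw [← isUnit_iff_isUnit_det, ← linearIndependent_cols_iff_isUnit,
    linearIndependent_iff_card_eq_finrank_span, Set.finrank, ← rank_eq_finrank_span_cols,
    rank_transpose_mul_self, h, Fintype.card_fin]

lemma transpose_mulVec_lsqSolution_residual {A : Matrix (Fin n) (Fin m) ℝ}
    (h : IsUnit (Aᵀ * A).det) (y : Fin n → ℝ) : Aᵀ *ᵥ (A *ᵥ lsqSolution A y - y) = 0 := by
  rw [mulVec_sub, lsqSolution, mulVec_mulVec, mulVec_mulVec, mul_nonsing_inv _ h, one_mulVec,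
    sub_self]

lemma sqnorm_residual_lsqSolution_le {A : Matrix (Fin n) (Fin m) ℝ}
    (h : IsUnit (Aᵀ * A).det) (y : Fin n → ℝ) (w : Fin m → ℝ) :
    sqnorm (A *ᵥ lsqSolution A y - y) ≤ sqnorm (A *ᵥ w - y) := by
  have hsplit : A *ᵥ w - y = A *ᵥ (w - lsqSolution A y) + (A *ᵥ lsqSolution A y - y) := by
    rw [mulVec_sub]
    abel
  have horth : A *ᵥ (w - lsqSolution A y) ⬝ᵥ (A *ᵥ lsqSolution A y - y) = 0 := by
    rw [dotProduct_comm, dotProduct_mulVec, ← mulVec_transpose,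
      transpose_mulVec_lsqSolution_residual h, zero_dotProduct]
  rw [hsplit, sqnorm_add_of_dotProduct_eq_zero horth]
  linarith [sqnorm_nonneg (A *ᵥ (w - lsqSolution A y))]

lemma lsqMin_eq_of_isUnit_det {A : Matrix (Fin n) (Fin m) ℝ}
    (h : IsUnit (Aᵀ * A).det) (y : Fin n → ℝ) :
    lsqMin A y = 1 / 2 * sqnorm (A *ᵥ lsqSolution A y - y) := by
  refine le_antisymm (ciInf_le (bddBelow_range_lsqObjective A y) _) (le_ciInf fun w => ?_)
  exact mul_le_mul_of_nonneg_left (sqnorm_residual_lsqSolution_le h y w) (by norm_num)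

lemma continuousAt_sqnorm_residual_lsqSolution {A₀ : Matrix (Fin n) (Fin m) ℝ}
    (h : IsUnit (A₀ᵀ * A₀).det) (y : Fin n → ℝ) :
    ContinuousAt (fun A : Matrix (Fin n) (Fin m) ℝ => sqnorm (A *ᵥ lsqSolution A y - y)) A₀ := by
  have hinv : ContinuousAt (fun A : Matrix (Fin n) (Fin m) ℝ => (Aᵀ * A)⁻¹) A₀ := by
    refine (continuousAt_matrix_inv _ ?_).comp
      (f := fun A : Matrix (Fin n) (Fin m) ℝ => Aᵀ * A) (by fun_prop)
    rw [Ring.inverse_eq_inv']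
    exact continuousAt_inv₀ h.ne_zero
  have := @continuous_sqnorm n
  unfold lsqSolution
  fun_prop

lemma continuousOn_lsqMin (y : Fin n → ℝ) :
    ContinuousOn (fun A : Matrix (Fin n) (Fin m) ℝ => lsqMin A y) {A | A.rank = m} := by
  have hclosed : ContinuousOn (fun A : Matrix (Fin n) (Fin m) ℝ =>
      1 / 2 * sqnorm (A *ᵥ lsqSolution A y - y)) {A | A.rank = m} := fun _ hA =>
    (continuousAt_const.mul (continuousAt_sqnorm_residual_lsqSolution
      (isUnit_det_transpose_mul_self_of_rank_eq hA) y)).continuousWithinAt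
  exact hclosed.congr fun _ hA => lsqMin_eq_of_isUnit_det
    (isUnit_det_transpose_mul_self_of_rank_eq hA) y

end LeastSquares

section Ridge

variable {n m : ℕ} {A : Matrix (Fin n) (Fin m) ℝ} (y : Fin n → ℝ) {lam : ℝ}

lemma lsqMin_le_ridgeMin (hlam : 0 ≤ lam) : lsqMin A y ≤ ridgeMin A y lam := by
  refine le_ciInf fun w => (ciInf_le (bddBelow_range_lsqObjective A y) w).trans ?_
  exact le_add_of_nonneg_right (mul_nonneg (by linarith) (sqnorm_nonneg w))

lemma ridgeMin_le_lsqMin_add (h : IsUnit (Aᵀ * A).det) (hlam : 0 ≤ lam) :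
    ridgeMin A y lam ≤ lsqMin A y + lam / 2 * sqnorm (lsqSolution A y) := by
  rw [lsqMin_eq_of_isUnit_det h]
  exact ciInf_le (bddBelow_range_ridgeObjective A y hlam) (lsqSolution A y)

end Ridge

theorem ridge_consistency_accumulation_points_general (d n m : ℕ)
    (P : Set (Fin d → ℝ)) (hPc : IsCompact P)
    (M : (Fin d → ℝ) → Matrix (Fin n) (Fin m) ℝ) (hM : ContinuousOn M P)
    (hrank : ∀ p ∈ P, (M p).rank = m)
    (y : Fin n → ℝ)
    (lamSeq : ℕ → ℝ) (hpos : ∀ k, 0 < lamSeq k)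
    (hlim : Tendsto lamSeq atTop (𝓝 0))
    (pk : ℕ → (Fin d → ℝ)) (hpkP : ∀ k, pk k ∈ P)
    (hmin : ∀ k, ∀ q ∈ P, ridgeMin (M (pk k)) y (lamSeq k) ≤ ridgeMin (M q) y (lamSeq k)) :
    ∀ q : Fin d → ℝ, MapClusterPt q atTop pk →
      q ∈ P ∧ ∀ q' ∈ P, lsqMin (M q) y ≤ lsqMin (M q') y := by
  intro q hq
  refine ⟨hPc.isClosed.mem_of_mapClusterPt hq (.of_forall hpkP), fun q' hq' => ?_⟩
  have hunit := isUnit_det_transpose_mul_self_of_rank_eq (hrank q' hq')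
  set c := sqnorm (lsqSolution (M q') y)
  refine le_of_forall_pos_le_add fun ε hε => ?_
  have hsmall : ∀ᶠ k in atTop, lamSeq k / 2 * c ≤ ε := by
    have : Tendsto (fun k => lamSeq k / 2 * c) atTop (𝓝 0) := by
      simpa using (hlim.div_const 2).mul_const c
    exact this.eventually (eventually_le_nhds hε)
  have hsublevel : IsClosed (P ∩ (fun p => lsqMin (M p) y) ⁻¹' Set.Iic (lsqMin (M q') y + ε)) :=
    ((continuousOn_lsqMin y).comp hM hrank).preimage_isClosed_of_isClosed hPc.isClosed
      isClosed_Iic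
  refine (hsublevel.mem_of_mapClusterPt hq ?_).2
  filter_upwards [hsmall] with k hk
  refine ⟨hpkP k, ?_⟩
  calc lsqMin (M (pk k)) y
      ≤ ridgeMin (M (pk k)) y (lamSeq k) := lsqMin_le_ridgeMin y (hpos k).le
    _ ≤ ridgeMin (M q') y (lamSeq k) := hmin k q' hq'
    _ ≤ lsqMin (M q') y + lamSeq k / 2 * c := ridgeMin_le_lsqMin_add y hunit (hpos k).le
    _ ≤ lsqMin (M q') y + ε := by linarith

/-- Consistency of ridge-regularized minimizers: under (A1) compactness, (A2)
continuity, and (A4) uniform full column rank, if `λ_k ↓ 0` and `p_k` is a global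
minimizer of `f_{λ_k}` over `𝒫`, then every accumulation point of `(p_k)` is a
global minimizer of `f_u` over `𝒫`. -/
theorem ridge_consistency_accumulation_points (d n m : ℕ)
    (P : Set (Fin d → ℝ)) (hPc : IsCompact P)
    (M : (Fin d → ℝ) → Matrix (Fin n) (Fin m) ℝ) (hM : ContinuousOn M P)
    (hrank : ∀ p ∈ P, (M p).rank = m)
    (y : Fin n → ℝ)
    (lamSeq : ℕ → ℝ) (hpos : ∀ k, 0 < lamSeq k) (hanti : Antitone lamSeq)
    (hlim : Tendsto lamSeq atTop (𝓝 0))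
    (pk : ℕ → (Fin d → ℝ)) (hpkP : ∀ k, pk k ∈ P)
    (hmin : ∀ k, ∀ q ∈ P, ridgeMin (M (pk k)) y (lamSeq k) ≤ ridgeMin (M q) y (lamSeq k)) :
    ∀ q : Fin d → ℝ, MapClusterPt q atTop pk →
      q ∈ P ∧ ∀ q' ∈ P, lsqMin (M q) y ≤ lsqMin (M q') y :=
  ridge_consistency_accumulation_points_general d n m P hPc M hM hrank y lamSeq hpos hlim pk hpkP
    hmin
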